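/- Let n ≥ 1, ρ ≥ 1, σ > 0, and let f ∈ [ρ, σ, W_ρ]. Define g on ℂ₊ⁿ by g(z_1,…,z_n) = f(z_1^{1/ρ},…,z_n^{1/ρ}), where each power is taken with the principal branch. Then g is holomorphic in ℂ₊ⁿ and g ∈ [1, σ·n^{ρ/2}, ℂ₊ⁿ]; in particular, if f ∈ [ρ, ∞, W_ρ) then g ∈ [1, ∞, ℂ₊ⁿ). -/

import Mathlib

/-!
On the right half-plane the principal branch `ζ ↦ ζ^(1/ρ)` is holomorphic and divides arguments
by `ρ`, so `w = (z_1^(1/ρ), …, z_n^(1/ρ))` maps `ℂ₊ⁿ` into `W_ρ`. Since `|w_j| = |z_j|^(1/ρ)`,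
`‖z‖^(1/ρ) ≤ ‖w‖ ≤ √n ‖z‖^(1/ρ)` (the lower bound by subadditivity of `t ↦ t^(1/ρ)`). The upper
bound gives `‖w‖^ρ ≤ n^(ρ/2) ‖z‖`, turning `log |f(w)| ≤ (σ + ε) ‖w‖^ρ` into an order-one bound
of type `σ n^(ρ/2)`; the lower bound makes `‖w‖ → ∞` as `‖z‖ → ∞`, so that estimate applies.
-/

open Filter Metric Set

noncomputable section

/-- The cone `W_τ = {z ∈ ℂⁿ : |arg z_j| < π/(2τ), j = 1,…,n}`. -/
def Wcone (n : ℕ) (τ : ℝ) : Set (EuclideanSpace ℂ (Fin n)) :=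
  {z | ∀ j, z j ≠ 0 ∧ |Complex.arg (z j)| < Real.pi / (2 * τ)}

/-- The coordinatewise power map `z_j ↦ z_j^ρ = exp(ρ Log z_j)` (principal branch). -/
def cpowMap (n : ℕ) (ρ : ℝ) (z : EuclideanSpace ℂ (Fin n)) : EuclideanSpace ℂ (Fin n) :=
  WithLp.toLp 2 (fun j => Complex.exp ((ρ : ℂ) * Complex.log (z j)))

/-- The class `[ρ, σ, C]`: `f` is holomorphic in `C` and
`limsup_{|z|→∞, z∈C} log|f(z)|/|z|^ρ ≤ σ` (Euclidean norm). -/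
def MemClass (n : ℕ) (ρ σ : ℝ) (C : Set (EuclideanSpace ℂ (Fin n)))
    (f : EuclideanSpace ℂ (Fin n) → ℂ) : Prop :=
  DifferentiableOn ℂ f C ∧
    ∀ ε > 0, ∃ R : ℝ, ∀ z ∈ C, R ≤ ‖z‖ →
      Real.log ‖f z‖ ≤ (σ + ε) * ‖z‖ ^ ρ

theorem Real.rpow_sum_le_sum_rpow {ι : Type*} (s : Finset ι) {f : ι → ℝ}
    (hf : ∀ i ∈ s, 0 ≤ f i) {p : ℝ} (hp₀ : 0 < p) (hp₁ : p ≤ 1) :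
    (∑ i ∈ s, f i) ^ p ≤ ∑ i ∈ s, f i ^ p :=
  Finset.le_sum_of_subadditive_on_pred (· ^ p) (0 ≤ ·) (Real.zero_rpow hp₀.ne').le
    (fun _ _ hx hy => Real.rpow_add_le_add_rpow hx hy hp₀.le hp₁) (fun _ _ => add_nonneg) f hf

theorem EuclideanSpace.norm_le_sqrt_card_mul {𝕜 ι : Type*} [RCLike 𝕜] [Fintype ι]
    {x : EuclideanSpace 𝕜 ι} {c : ℝ} (hc : 0 ≤ c) (hx : ∀ i, ‖x i‖ ≤ c) :
    ‖x‖ ≤ √(Fintype.card ι) * c :=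
  calc ‖x‖ = √(∑ i, ‖x i‖ ^ 2) := EuclideanSpace.norm_eq x
    _ ≤ √(∑ _i : ι, c ^ 2) := by gcongr with i; exact hx i
    _ = √(Fintype.card ι) * c := by
      rw [Finset.sum_const, Finset.card_univ, nsmul_eq_mul,
        Real.sqrt_mul (Nat.cast_nonneg _), Real.sqrt_sq hc]

namespace Complex

theorem norm_exp_ofReal_mul_log {ζ : ℂ} (hζ : ζ ≠ 0) (r : ℝ) :
    ‖exp (r * log ζ)‖ = ‖ζ‖ ^ r := by
  rw [norm_exp, re_ofReal_mul, log_re, Real.rpow_def_of_pos (norm_pos_iff.mpr hζ), mul_comm]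

theorem arg_exp_ofReal_mul_log {ζ : ℂ} {r : ℝ} (h : r * arg ζ ∈ Ioc (-Real.pi) Real.pi) :
    arg (exp (r * log ζ)) = r * arg ζ := by
  rw [arg_exp, im_ofReal_mul, log_im, toIocMod_eq_self]
  exact ⟨h.1, h.2.trans_eq (by ring)⟩

end Complex

section PowerMap

variable {n : ℕ}

theorem cpowMap_apply (r : ℝ) (z : EuclideanSpace ℂ (Fin n)) (j : Fin n) :
    cpowMap n r z j = Complex.exp (r * Complex.log (z j)) :=
  rfl

theorem mem_slitPlane_of_mem_Wcone {τ : ℝ} (hτ : 1 / 2 ≤ τ) {z : EuclideanSpace ℂ (Fin n)}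
    (hz : z ∈ Wcone n τ) (j : Fin n) : z j ∈ Complex.slitPlane := by
  obtain ⟨hzj, harg⟩ := hz j
  have : Real.pi / (2 * τ) ≤ Real.pi := by
    rw [div_le_iff₀ (by linarith)]
    nlinarith [Real.pi_pos]
  refine Complex.mem_slitPlane_iff_arg.mpr ⟨fun h => ?_, hzj⟩
  rw [h, abs_of_pos Real.pi_pos] at harg
  linarith

theorem differentiableAt_cpowMap (r : ℝ) {z : EuclideanSpace ℂ (Fin n)}
    (hz : ∀ j, z j ∈ Complex.slitPlane) : DifferentiableAt ℂ (cpowMap n r) z :=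
  differentiableAt_euclidean.mpr fun j => by
    have hproj : DifferentiableAt ℂ (fun x : EuclideanSpace ℂ (Fin n) => x j) z :=
      (PiLp.proj 2 (𝕜 := ℂ) (fun _ : Fin n => ℂ) j).differentiableAt
    exact ((hproj.clog (hz j)).const_mul (r : ℂ)).cexp

theorem mapsTo_cpowMap_Wcone {r τ : ℝ} (hr : 0 < r) (hτ : 0 < τ) (hrτ : r ≤ 2 * τ) :
    MapsTo (cpowMap n r) (Wcone n τ) (Wcone n (τ / r)) := by
  intro z hz j
  obtain ⟨hzj, harg⟩ := hz j
  have hlt : |r * Complex.arg (z j)| < Real.pi / (2 * (τ / r)) := by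
    calc |r * Complex.arg (z j)| = r * |Complex.arg (z j)| := by rw [abs_mul, abs_of_pos hr]
      _ < r * (Real.pi / (2 * τ)) := by gcongr
      _ = Real.pi / (2 * (τ / r)) := by field_simp
  have hle : Real.pi / (2 * (τ / r)) ≤ Real.pi := by
    rw [div_le_iff₀ (by positivity), le_mul_iff_one_le_right Real.pi_pos, mul_div_assoc',
      le_div_iff₀ hr]
    linarith
  have hmem : r * Complex.arg (z j) ∈ Ioc (-Real.pi) Real.pi :=
    ⟨by linarith [(abs_lt.mp hlt).1], by linarith [(abs_lt.mp hlt).2]⟩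
  rw [cpowMap_apply, Complex.arg_exp_ofReal_mul_log hmem]
  exact ⟨Complex.exp_ne_zero _, hlt⟩

theorem norm_cpowMap_apply (r : ℝ) {z : EuclideanSpace ℂ (Fin n)} {j : Fin n} (hz : z j ≠ 0) :
    ‖cpowMap n r z j‖ = ‖z j‖ ^ r :=
  Complex.norm_exp_ofReal_mul_log hz r

theorem norm_cpowMap_le {r : ℝ} (hr : 0 ≤ r) {z : EuclideanSpace ℂ (Fin n)} (hz : ∀ j, z j ≠ 0) :
    ‖cpowMap n r z‖ ≤ √n * ‖z‖ ^ r := by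
  refine (EuclideanSpace.norm_le_sqrt_card_mul (c := ‖z‖ ^ r) (by positivity) fun j => ?_).trans_eq
    (by simp)
  rw [norm_cpowMap_apply r (hz j)]
  exact Real.rpow_le_rpow (norm_nonneg _) (PiLp.norm_apply_le z j) hr

theorem norm_rpow_le_norm_cpowMap {r : ℝ} (hr₀ : 0 < r) (hr₁ : r ≤ 1)
    {z : EuclideanSpace ℂ (Fin n)} (hz : ∀ j, z j ≠ 0) :
    ‖z‖ ^ r ≤ ‖cpowMap n r z‖ := by
  refine pow_le_pow_iff_left₀ (by positivity) (norm_nonneg _) two_ne_zero |>.mp ?_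
  calc (‖z‖ ^ r) ^ 2 = (∑ j, ‖z j‖ ^ 2) ^ r := by
        rw [Real.rpow_pow_comm (norm_nonneg _), EuclideanSpace.norm_sq_eq]
    _ ≤ ∑ j, (‖z j‖ ^ 2) ^ r := Real.rpow_sum_le_sum_rpow _ (fun j _ => by positivity) hr₀ hr₁
    _ = ‖cpowMap n r z‖ ^ 2 := by
        simp only [EuclideanSpace.norm_sq_eq, norm_cpowMap_apply r (hz _),
          Real.rpow_pow_comm (norm_nonneg _)]

end PowerMap

section Growth

variable {n : ℕ} {ρ σ : ℝ} {C : Set (EuclideanSpace ℂ (Fin n))}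
  {f : EuclideanSpace ℂ (Fin n) → ℂ}

theorem MemClass.mono {σ' : ℝ} (hf : MemClass n ρ σ C f) (hσ : σ ≤ σ') :
    MemClass n ρ σ' C f := by
  refine ⟨hf.1, fun ε hε => ?_⟩
  obtain ⟨R, hR⟩ := hf.2 ε hε
  exact ⟨R, fun z hz hzR => (hR z hz hzR).trans (by gcongr)⟩

theorem MemClass.comp {ρ' K : ℝ} {D : Set (EuclideanSpace ℂ (Fin n))}
    {φ : EuclideanSpace ℂ (Fin n) → EuclideanSpace ℂ (Fin n)}
    (hf : MemClass n ρ σ C f) (hσ : 0 ≤ σ) (hK : 0 ≤ K)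
    (hφ : DifferentiableOn ℂ φ D) (hmaps : MapsTo φ D C)
    (hbound : ∀ z ∈ D, ‖φ z‖ ^ ρ ≤ K * ‖z‖ ^ ρ')
    (htendsto : ∀ R, ∃ R', ∀ z ∈ D, R' ≤ ‖z‖ → R ≤ ‖φ z‖) :
    MemClass n ρ' (σ * K) D (fun z => f (φ z)) := by
  refine ⟨hf.1.comp hφ hmaps, fun ε hε => ?_⟩
  obtain ⟨R, hR⟩ := hf.2 (ε / (K + 1)) (by positivity)
  obtain ⟨R', hR'⟩ := htendsto R
  have hεK : ε / (K + 1) * K ≤ ε := by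
    rw [div_mul_eq_mul_div, div_le_iff₀ (by positivity)]
    nlinarith
  refine ⟨R', fun z hz hzR' => ?_⟩
  calc Real.log ‖f (φ z)‖ ≤ (σ + ε / (K + 1)) * ‖φ z‖ ^ ρ := hR _ (hmaps hz) (hR' z hz hzR')
    _ ≤ (σ + ε / (K + 1)) * (K * ‖z‖ ^ ρ') := by gcongr; exact hbound z hz
    _ ≤ (σ * K + ε) * ‖z‖ ^ ρ' := by
        rw [← mul_assoc, add_mul]
        gcongr

theorem MemClass.comp_cpowMap_inv (hρ : 1 ≤ ρ) (hσ : 0 ≤ σ)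
    (hf : MemClass n ρ σ (Wcone n ρ) f) :
    MemClass n 1 (σ * (n : ℝ) ^ (ρ / 2)) (Wcone n 1) (fun z => f (cpowMap n ρ⁻¹ z)) := by
  have hρ₀ : 0 < ρ := zero_lt_one.trans_le hρ
  have hr₀ : 0 < ρ⁻¹ := inv_pos.mpr hρ₀
  have hr₁ : ρ⁻¹ ≤ 1 := inv_le_one_of_one_le₀ hρ
  have hne : ∀ z ∈ Wcone n 1, ∀ j, z j ≠ 0 := fun z hz j => (hz j).1
  refine hf.comp hσ (by positivity) ?_ ?_ ?_ ?_
  · exact fun z hz => (differentiableAt_cpowMap _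
      (mem_slitPlane_of_mem_Wcone (by norm_num) hz)).differentiableWithinAt
  · simpa using mapsTo_cpowMap_Wcone (n := n) hr₀ one_pos (by linarith)
  · intro z hz
    calc ‖cpowMap n ρ⁻¹ z‖ ^ ρ ≤ (√n * ‖z‖ ^ ρ⁻¹) ^ ρ := by
          gcongr; exact norm_cpowMap_le hr₀.le (hne z hz)
      _ = (n : ℝ) ^ (ρ / 2) * ‖z‖ ^ (1 : ℝ) := by
          rw [Real.mul_rpow (by positivity) (by positivity), Real.sqrt_eq_rpow,
            ← Real.rpow_mul (by positivity), Real.rpow_inv_rpow (norm_nonneg _) hρ₀.ne',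
            Real.rpow_one, one_div_mul_eq_div]
  · intro R
    refine ⟨|R| ^ ρ, fun z hz hR => ?_⟩
    calc R ≤ (|R| ^ ρ) ^ ρ⁻¹ := by
          rw [Real.rpow_rpow_inv (abs_nonneg R) hρ₀.ne']; exact le_abs_self R
      _ ≤ ‖z‖ ^ ρ⁻¹ := by gcongr
      _ ≤ ‖cpowMap n ρ⁻¹ z‖ := norm_rpow_le_norm_cpowMap hr₀ hr₁ (hne z hz)

end Growth

theorem order_reduction_general (n : ℕ) (ρ : ℝ) (hρ : 1 ≤ ρ) (σ : ℝ) (hσ : 0 < σ)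
    (f : EuclideanSpace ℂ (Fin n) → ℂ) (hf : MemClass n ρ σ (Wcone n ρ) f) :
    MemClass n 1 (σ * (n : ℝ) ^ (ρ / 2)) (Wcone n 1) (fun z => f (cpowMap n ρ⁻¹ z)) ∧
    (∀ f' : EuclideanSpace ℂ (Fin n) → ℂ,
      (∃ σ' > (0:ℝ), MemClass n ρ σ' (Wcone n ρ) f') →
      ∃ σ'' > (0:ℝ), MemClass n 1 σ'' (Wcone n 1) (fun z => f' (cpowMap n ρ⁻¹ z))) := by
  refine ⟨hf.comp_cpowMap_inv hρ hσ.le, ?_⟩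
  rintro f' ⟨σ', hσ', hf'⟩
  -- `σ' * n ^ (ρ / 2)` vanishes when `n = 0`.
  exact ⟨max σ' (σ' * (n : ℝ) ^ (ρ / 2)), lt_max_of_lt_left hσ',
    (hf'.comp_cpowMap_inv hρ hσ'.le).mono (le_max_right _ _)⟩

/-- **Reduction from order `ρ` in `W_ρ` to order `1` in `ℂ₊ⁿ`.** If `f ∈ [ρ,σ,W_ρ]`
with `ρ ≥ 1`, `σ > 0`, then `g(z) = f(z_1^{1/ρ},…,z_n^{1/ρ})` (principal branches)
is holomorphic in `ℂ₊ⁿ = W_1` and belongs to `[1, σ·n^{ρ/2}, ℂ₊ⁿ]`; in particular,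
every `f' ∈ [ρ,∞,W_ρ)` gives `g' ∈ [1,∞,ℂ₊ⁿ)`. -/
theorem order_reduction (n : ℕ) (hn : 1 ≤ n) (ρ : ℝ) (hρ : 1 ≤ ρ) (σ : ℝ) (hσ : 0 < σ)
    (f : EuclideanSpace ℂ (Fin n) → ℂ) (hf : MemClass n ρ σ (Wcone n ρ) f) :
    MemClass n 1 (σ * (n : ℝ) ^ (ρ / 2)) (Wcone n 1) (fun z => f (cpowMap n ρ⁻¹ z)) ∧
    (∀ f' : EuclideanSpace ℂ (Fin n) → ℂ,
      (∃ σ' > (0:ℝ), MemClass n ρ σ' (Wcone n ρ) f') →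
      ∃ σ'' > (0:ℝ), MemClass n 1 σ'' (Wcone n 1) (fun z => f' (cpowMap n ρ⁻¹ z))) :=
  order_reduction_general n ρ hρ σ hσ f hf
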